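/- arXiv:2207.01364 — 2 statements merged into one kernel-verified Lean document; each statement's English description precedes it below -/
import Mathlib

section
/- Let T be an invertible subintensity matrix, partitioned according to a state-space split E = E⁺ ∪ E⁰ as T = [[T⁺⁺, T⁺⁰],[T⁰⁺, T⁰⁰]], and let T⁺⁺ = T_D + T_A be the decomposition into diagonal and off-diagonal parts. Define the augmented matrix T̃₁ = [[T_D, T⁺⁰, T_A, 0],[0, T⁰⁰, T⁰⁺, 0],[0, 0, T⁺⁺, T⁺⁰],[0, 0, T⁰⁺, T⁰⁰]] and augmented initial vector α̃₁ = (α⁺, 0, 0, 0), where α = (α⁺, 0). Then the phase-type distributions with representations (α, T) and (α̃₁, T̃₁) are equal, i.e., α̃₁ exp(T̃₁ y) ẽ = α exp(T y) e for all y ≥ 0. -/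
open Matrix Filter

def IsSubintensity {n : Type*} [Fintype n] (T : Matrix n n ℝ) : Prop :=
  (∀ i, T i i < 0) ∧ (∀ i j, i ≠ j → 0 ≤ T i j) ∧ (∀ i, ∑ j, T i j ≤ 0)

/-- If `A * P = P * B` then the exponentials intertwine: `exp A * P = P * exp B`. -/
lemma exp_mul_eq_mul_exp {m n : Type*} [Fintype m] [Fintype n] [DecidableEq m] [DecidableEq n]
    (A : Matrix m m ℝ) (B : Matrix n n ℝ) (P : Matrix m n ℝ) (h : A * P = P * B) :
    NormedSpace.exp A * P = P * NormedSpace.exp B := by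
  have hpow : ∀ k : ℕ, A ^ k * P = P * B ^ k := by
    intro k
    induction k with
    | zero => simp
    | succ k ih =>
      rw [pow_succ, pow_succ, Matrix.mul_assoc, h, ← Matrix.mul_assoc, ih, Matrix.mul_assoc]
  letI : SeminormedRing (Matrix m m ℝ) := Matrix.linftyOpSemiNormedRing
  letI : NormedRing (Matrix m m ℝ) := Matrix.linftyOpNormedRing
  letI : NormedAlgebra ℝ (Matrix m m ℝ) := Matrix.linftyOpNormedAlgebra
  letI : SeminormedRing (Matrix n n ℝ) := Matrix.linftyOpSemiNormedRing
  letI : NormedRing (Matrix n n ℝ) := Matrix.linftyOpNormedRing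
  letI : NormedAlgebra ℝ (Matrix n n ℝ) := Matrix.linftyOpNormedAlgebra
  have hcont1 : Continuous fun X : Matrix m m ℝ => X * P :=
    continuous_id.matrix_mul continuous_const
  have hcont2 : Continuous fun X : Matrix n n ℝ => P * X :=
    continuous_const.matrix_mul continuous_id
  have h1 : HasSum (fun k : ℕ => (((k.factorial : ℝ))⁻¹ • A ^ k) * P) (NormedSpace.exp A * P) :=
    HasSum.map (NormedSpace.exp_series_hasSum_exp' (𝕂 := ℝ) A)
      (AddMonoidHom.mk' (fun X : Matrix m m ℝ => X * P) fun x y => Matrix.add_mul x y P) hcont1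
  have h2 : HasSum (fun k : ℕ => P * (((k.factorial : ℝ))⁻¹ • B ^ k)) (P * NormedSpace.exp B) :=
    HasSum.map (NormedSpace.exp_series_hasSum_exp' (𝕂 := ℝ) B)
      (AddMonoidHom.mk' (fun X : Matrix n n ℝ => P * X) fun x y => Matrix.mul_add P x y) hcont2
  refine h1.unique ?_
  convert h2 using 2 with k
  rw [Matrix.smul_mul, hpow, Matrix.mul_smul]

theorem stmt_6 {a b : ℕ}
    (Tpp : Matrix (Fin a) (Fin a) ℝ) (Tp0 : Matrix (Fin a) (Fin b) ℝ)
    (T0p : Matrix (Fin b) (Fin a) ℝ) (T00 : Matrix (Fin b) (Fin b) ℝ)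
    (T : Matrix (Fin a ⊕ Fin b) (Fin a ⊕ Fin b) ℝ)
    (hT : T = fromBlocks Tpp Tp0 T0p T00)
    (hsub : IsSubintensity T) (hinv : IsUnit T.det)
    (TD TA : Matrix (Fin a) (Fin a) ℝ)
    (hTD : TD = Matrix.diagonal (fun i => Tpp i i)) (hTA : TA = Tpp - TD)
    (Ttil : Matrix ((Fin a ⊕ Fin b) ⊕ (Fin a ⊕ Fin b))
      ((Fin a ⊕ Fin b) ⊕ (Fin a ⊕ Fin b)) ℝ)
    (hTtil : Ttil = fromBlocks (fromBlocks TD Tp0 0 T00) (fromBlocks TA 0 T0p 0) 0 T)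
    (αp : Fin a → ℝ)
    (α : Fin a ⊕ Fin b → ℝ) (hα : α = Sum.elim αp 0)
    (αtil : (Fin a ⊕ Fin b) ⊕ (Fin a ⊕ Fin b) → ℝ) (hαtil : αtil = Sum.elim α 0) :
    ∀ y : ℝ, 0 ≤ y →
      αtil ⬝ᵥ (NormedSpace.exp (y • Ttil)) *ᵥ (1 : (Fin a ⊕ Fin b) ⊕ (Fin a ⊕ Fin b) → ℝ) =
        α ⬝ᵥ (NormedSpace.exp (y • T)) *ᵥ (1 : Fin a ⊕ Fin b → ℝ) := by
  intro y _
  set P : Matrix ((Fin a ⊕ Fin b) ⊕ (Fin a ⊕ Fin b)) (Fin a ⊕ Fin b) ℝ :=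
    fromRows 1 1 with hP
  have hmul : Ttil * P = P * T := by
    rw [hTtil, hP, fromBlocks_mul_fromRows, fromRows_mul, hT, hTA]
    ext i j
    rcases i with (i | i) | (i | i) <;> rcases j with j | j <;>
      simp [Matrix.add_apply, Matrix.sub_apply]
  have hmul' : (y • Ttil) * P = P * (y • T) := by
    rw [Matrix.smul_mul, hmul, Matrix.mul_smul]
  have hexp := exp_mul_eq_mul_exp (y • Ttil) (y • T) P hmul'
  have hone : (1 : (Fin a ⊕ Fin b) ⊕ (Fin a ⊕ Fin b) → ℝ) =
      P *ᵥ (1 : Fin a ⊕ Fin b → ℝ) := by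
    rw [hP, fromRows_mulVec, Matrix.one_mulVec]
    ext (i | i) <;> rfl
  have hvec : αtil ᵥ* P = α := by
    rw [hαtil, hP, sumElim_vecMul_fromRows, Matrix.vecMul_one, Matrix.zero_vecMul, add_zero]
  rw [hone, mulVec_mulVec, hexp, ← mulVec_mulVec, dotProduct_mulVec, hvec]
end

section
/- Let T̃ be the block upper-triangular matrix [[A, B],[0, A]] where B = t α (an outer product of column vector t and row vector α). Then exp(T̃ y) = [[exp(Ay), J(y)],[0, exp(Ay)]], where J(y) = ∫₀^y exp(A(y-u)) t α exp(A u) du (Van Loan's identity). -/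
open Matrix MeasureTheory

section Helpers

open NormedSpace

attribute [local instance] Matrix.linftyOpSemiNormedRing Matrix.linftyOpNormedRing
  Matrix.linftyOpNormedAlgebra

variable {n : Type*} [Fintype n] [DecidableEq n]

/-- Uniqueness: a solution of `G' = T G`, `G 0 = 1` equals `exp (y • T)`. -/
lemma expUnique_aux {T : Matrix n n ℝ} {G : ℝ → Matrix n n ℝ}
    (hG : ∀ z, HasDerivAt G (T * G z) z) (hG0 : G 0 = 1) (y : ℝ) :
    G y = exp (y • T) := by
  have key : ∀ z : ℝ, HasDerivAt (fun z => exp (z • (-T)) * G z) 0 z := by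
    intro z
    have h1 := hasDerivAt_exp_smul_const (𝕂 := ℝ) (-T) z
    have h2 := h1.mul (hG z)
    refine h2.congr_deriv ?_
    rw [mul_assoc, ← mul_add, neg_mul, neg_add_cancel, mul_zero]
  have const : ∀ z : ℝ, exp (z • (-T)) * G z = exp ((0:ℝ) • (-T)) * G 0 := fun z =>
    is_const_of_deriv_eq_zero (fun x => (key x).differentiableAt)
      (fun x => (key x).deriv) z 0
  have hy : exp (y • (-T)) * G y = 1 := by
    rw [const y, hG0, zero_smul, exp_zero, one_mul]
  have hinv : exp (y • T) * exp (y • (-T)) = 1 := by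
    rw [← Matrix.exp_add_of_commute _ _ (((Commute.refl T).neg_right.smul_left y).smul_right y),
      smul_neg, add_neg_cancel, exp_zero]
  calc G y = (exp (y • T) * exp (y • (-T))) * G y := by rw [hinv, one_mul]
    _ = exp (y • T) * (exp (y • (-T)) * G y) := by rw [mul_assoc]
    _ = exp (y • T) := by rw [hy, mul_one]

private noncomputable def entryCLM (i j : n) : Matrix n n ℝ →L[ℝ] ℝ :=
  LinearMap.toContinuousLinearMap
    { toFun := fun M => M i j
      map_add' := fun _ _ => rfl
      map_smul' := fun _ _ => rfl }

private lemma integral_entry {f : ℝ → Matrix n n ℝ} (hf : Continuous f) {a b : ℝ} (i j : n) :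
    (∫ u in a..b, f u) i j = ∫ u in a..b, f u i j := by
  have := (entryCLM i j).intervalIntegral_comp_comm
    (μ := MeasureTheory.volume) (hf.intervalIntegrable a b)
  exact this.symm

private lemma mulLeft_integral (M : Matrix n n ℝ) {f : ℝ → Matrix n n ℝ}
    (hf : Continuous f) (a b : ℝ) :
    M * (∫ u in a..b, f u) = ∫ u in a..b, M * f u := by
  have := (LinearMap.toContinuousLinearMap
      (LinearMap.mulLeft ℝ M)).intervalIntegral_comp_comm
    (μ := MeasureTheory.volume) (hf.intervalIntegrable a b)
  exact this.symm

lemma vanLoan_aux {p : ℕ} (A : Matrix (Fin p) (Fin p) ℝ) (t α : Fin p → ℝ) (y : ℝ)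
    (J : Matrix (Fin p) (Fin p) ℝ)
    (hJ : ∀ i j, J i j =
      ∫ u in (0:ℝ)..y,
        (exp ((y - u) • A) * vecMulVec t α * exp (u • A)) i j) :
    exp (y • fromBlocks A (vecMulVec t α) 0 A) =
      fromBlocks (exp (y • A)) J 0 (exp (y • A)) := by
  set B := vecMulVec t α with hB
  set T := fromBlocks A B 0 A with hT
  -- basic continuity facts
  have cA : Continuous fun u : ℝ => exp (u • A) :=
    exp_continuous.comp (continuous_id.smul continuous_const)
  have cA' : Continuous fun u : ℝ => exp (u • (-A)) :=
    exp_continuous.comp (continuous_id.smul continuous_const)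
  set g : ℝ → Matrix (Fin p) (Fin p) ℝ := fun u => exp (u • (-A)) * B * exp (u • A)
    with hg_def
  have hg : Continuous g := (cA'.mul continuous_const).mul cA
  set K : ℝ → Matrix (Fin p) (Fin p) ℝ := fun z => ∫ u in (0:ℝ)..z, g u with hK_def
  have hK : ∀ z, HasDerivAt K (g z) z := fun z =>
    intervalIntegral.integral_hasDerivAt_right (hg.intervalIntegrable 0 z)
      (ContinuousAt.stronglyMeasurableAtFilter isOpen_univ (fun x _ => hg.continuousAt) z trivial) hg.continuousAt
  set e : ℝ → Matrix (Fin p) (Fin p) ℝ := fun z => exp (z • A) with he_def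
  have he : ∀ z, HasDerivAt e (e z * A) z := fun z => hasDerivAt_exp_smul_const (𝕂 := ℝ) A z
  have hcomm : ∀ z : ℝ, e z * A = A * e z := fun z =>
    (Commute.exp_right ((Commute.refl A).smul_right z)).symm.eq
  have hinv : ∀ z : ℝ, e z * exp (z • (-A)) = 1 := by
    intro z
    show exp (z • A) * exp (z • (-A)) = 1
    rw [← Matrix.exp_add_of_commute _ _ (((Commute.refl A).neg_right.smul_left z).smul_right z),
      smul_neg, add_neg_cancel, exp_zero]
  set Jf : ℝ → Matrix (Fin p) (Fin p) ℝ := fun z => e z * K z with hJf_def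
  have hJf : ∀ z, HasDerivAt Jf (A * Jf z + B * e z) z := by
    intro z
    have hgz : e z * g z = B * e z := by
      show e z * (exp (z • (-A)) * B * exp (z • A)) = B * e z
      rw [← mul_assoc, ← mul_assoc, hinv z, one_mul]
    have h := (he z).mul (hK z)
    refine h.congr_deriv ?_
    rw [hgz, hcomm z, mul_assoc]
  -- the block matrix function
  let L : (Matrix (Fin p) (Fin p) ℝ × Matrix (Fin p) (Fin p) ℝ × Matrix (Fin p) (Fin p) ℝ)
      →ₗ[ℝ] Matrix (Fin p ⊕ Fin p) (Fin p ⊕ Fin p) ℝ :=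
    { toFun := fun x => fromBlocks x.1 x.2.1 0 x.2.2
      map_add' := by
        intro x y
        simp [fromBlocks_add]
      map_smul' := by
        intro c x
        simp [fromBlocks_smul] }
  let Lc := LinearMap.toContinuousLinearMap L
  set G : ℝ → Matrix (Fin p ⊕ Fin p) (Fin p ⊕ Fin p) ℝ :=
    fun z => fromBlocks (e z) (Jf z) 0 (e z) with hG_def
  have hG : ∀ z, HasDerivAt G (T * G z) z := by
    intro z
    have hprod : HasDerivAt (fun z => (e z, Jf z, e z))
        (e z * A, A * Jf z + B * e z, e z * A) z :=
      (he z).prodMk ((hJf z).prodMk (he z))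
    have h := Lc.hasFDerivAt.comp_hasDerivAt z hprod
    have hder : Lc (e z * A, A * Jf z + B * e z, e z * A) = T * G z := by
      show fromBlocks (e z * A) (A * Jf z + B * e z) 0 (e z * A) = T * G z
      rw [hT, hG_def, fromBlocks_multiply]
      simp [hcomm z]
    replace h := h.congr_deriv hder
    exact h
  have he0 : e 0 = 1 := by
    show exp ((0:ℝ) • A) = 1
    rw [zero_smul, exp_zero]
  have hG0 : G 0 = 1 := by
    have hJf0 : Jf 0 = 0 := by
      show e 0 * (∫ u in (0:ℝ)..(0:ℝ), g u) = 0
      rw [intervalIntegral.integral_same, mul_zero]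
    show fromBlocks (e 0) (Jf 0) 0 (e 0) = 1
    rw [he0, hJf0]
    exact fromBlocks_one
  -- identify J with Jf y
  have hint : Jf y = ∫ u in (0:ℝ)..y, exp ((y - u) • A) * B * exp (u • A) := by
    show e y * (∫ u in (0:ℝ)..y, g u) = _
    rw [mulLeft_integral (e y) hg]
    congr 1
    funext u
    have hsplit : exp ((y - u) • A) = exp (y • A) * exp (u • (-A)) := by
      rw [← Matrix.exp_add_of_commute _ _ (((Commute.refl A).neg_right.smul_left y).smul_right u),
        smul_neg, ← sub_eq_add_neg, ← sub_smul]
    show e y * (exp (u • (-A)) * B * exp (u • A))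
        = exp ((y - u) • A) * B * exp (u • A)
    rw [hsplit]
    show exp (y • A) * (exp (u • (-A)) * B * exp (u • A))
        = exp (y • A) * exp (u • (-A)) * B * exp (u • A)
    simp only [mul_assoc]
  have hJeq : J = Jf y := by
    ext i j
    rw [hJ i j, hint]
    have hcont : Continuous fun u : ℝ => exp ((y - u) • A) * B * exp (u • A) := by
      refine Continuous.mul (Continuous.mul ?_ continuous_const) cA
      exact exp_continuous.comp ((continuous_const.sub continuous_id).smul continuous_const)
    rw [integral_entry hcont]
  rw [hJeq]
  exact ((expUnique_aux hG hG0 y).symm : exp (y • T) = G y)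

end Helpers

theorem stmt_7 {p : ℕ} (A : Matrix (Fin p) (Fin p) ℝ) (t α : Fin p → ℝ) (y : ℝ)
    (J : Matrix (Fin p) (Fin p) ℝ)
    (hJ : ∀ i j, J i j =
      ∫ u in (0:ℝ)..y,
        (NormedSpace.exp ((y - u) • A) * vecMulVec t α * NormedSpace.exp (u • A)) i j) :
    NormedSpace.exp (y • fromBlocks A (vecMulVec t α) 0 A) =
      fromBlocks (NormedSpace.exp (y • A)) J 0 (NormedSpace.exp (y • A)) := by
  exact vanLoan_aux A t α y J hJ
end
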